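/- arXiv:2109.02733 — 3 statements merged into one kernel-verified Lean document; each statement's English description precedes it below -/
import Mathlib

section
/- Every finite tree T with maximum degree at most 4 admits a straight model (s-model), i.e., there exists an injective map φ : V(T) → ℤ × ℤ drawing each edge as a horizontal or vertical straight grid segment such that the segments drawn for distinct edges intersect only at the image of a common endpoint of those edges. -/
open SimpleGraph

/-- The closed axis-parallel grid segment (bounding box) with corners `p` and `q`.
For axis-aligned `p`, `q` this is exactly the straight segment joining them. -/
def seg (p q : ℤ × ℤ) : Set (ℤ × ℤ) :=
  {r | r.1 ∈ Set.uIcc p.1 q.1 ∧ r.2 ∈ Set.uIcc p.2 q.2}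

/-- A straight model (s-model) of a graph `G`: an injective drawing of the vertices on the
grid `ℤ × ℤ` such that every edge is a horizontal or vertical straight segment, and segments
of distinct edges meet only at the image of a common endpoint. -/
structure SModel {V : Type*} (G : SimpleGraph V) where
  toFun : V → ℤ × ℤ
  inj : Function.Injective toFun
  axisAligned : ∀ ⦃u v : V⦄, G.Adj u v →
    ((toFun u).1 = (toFun v).1 ∧ (toFun u).2 ≠ (toFun v).2) ∨
    ((toFun u).2 = (toFun v).2 ∧ (toFun u).1 ≠ (toFun v).1)
  noCross : ∀ ⦃u v x y : V⦄, G.Adj u v → G.Adj x y → s(u, v) ≠ s(x, y) →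
    ∀ r ∈ seg (toFun u) (toFun v) ∩ seg (toFun x) (toFun y),
      ∃ w : V, (w = u ∨ w = v) ∧ (w = x ∨ w = y) ∧ toFun w = r

/-- The drawing `φ` bends at `b` when passing `a, b, c`: one of the two segments is
vertical and the other horizontal. -/
def bendAt {V : Type*} (φ : V → ℤ × ℤ) (a b c : V) : Prop :=
  ((φ a).1 = (φ b).1 ∧ (φ b).2 = (φ c).2) ∨
  ((φ a).2 = (φ b).2 ∧ (φ b).1 = (φ c).1)

instance {V : Type*} (φ : V → ℤ × ℤ) (a b c : V) : Decidable (bendAt φ a b c) := by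
  unfold bendAt; infer_instance

/-- The list of internal vertices, in order, at which the drawing of the given vertex list
bends. -/
def bendVertices {V : Type*} (φ : V → ℤ × ℤ) : List V → List V
  | a :: b :: c :: rest =>
      (if bendAt φ a b c then [b] else []) ++ bendVertices φ (b :: c :: rest)
  | _ => []

/-- The number of bends of (the drawing of) a vertex list. -/
def bends {V : Type*} (φ : V → ℤ × ℤ) (L : List V) : ℕ :=
  (bendVertices φ L).length

section Defs

variable {V : Type*} [Fintype V]

/-- `b(φ)`: the maximum number of bends over all leaf-to-leaf paths (0 if there are none). -/
noncomputable def bendNum {G : SimpleGraph V} [DecidableRel G.Adj] (M : SModel G) : ℕ :=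
  sSup {n | ∃ (a b : V) (W : G.Walk a b), W.IsPath ∧ G.degree a = 1 ∧ G.degree b = 1 ∧
    bends M.toFun W.support = n}

/-- `b(T)`: the minimum of `b(φ)` over all s-models `φ`. -/
noncomputable def treeBendNum (G : SimpleGraph V) [DecidableRel G.Adj] : ℕ :=
  sInf {n | ∃ M : SModel G, bendNum M = n}

/-- `b^ℓ_φ(p, v)`: the maximum number of bends over all paths from `p` to a leaf that
contain `v`. -/
noncomputable def leafBend {G : SimpleGraph V} [DecidableRel G.Adj] (M : SModel G)
    (p v : V) : ℕ :=
  sSup {n | ∃ (f : V) (W : G.Walk p f), W.IsPath ∧ G.degree f = 1 ∧ v ∈ W.support ∧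
    bends M.toFun W.support = n}

/-- `b^ℓ_T(p, v)`: the minimum of `b^ℓ_φ(p, v)` over all s-models `φ`. -/
noncomputable def leafBendMin (G : SimpleGraph V) [DecidableRel G.Adj] (p v : V) : ℕ :=
  sInf {n | ∃ M : SModel G, leafBend M p v = n}

/-- `b_φ(v)`: the maximum number of bends over all leaf-to-leaf paths containing `v`. -/
noncomputable def bendNumAt {G : SimpleGraph V} [DecidableRel G.Adj] (M : SModel G)
    (v : V) : ℕ :=
  sSup {n | ∃ (a b : V) (W : G.Walk a b), W.IsPath ∧ G.degree a = 1 ∧ G.degree b = 1 ∧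
    v ∈ W.support ∧ bends M.toFun W.support = n}

/-- `p`, `q`, `r` lie on a common horizontal or vertical grid line. -/
def collinearGrid (p q r : ℤ × ℤ) : Prop :=
  (p.1 = q.1 ∧ q.1 = r.1) ∨ (p.2 = q.2 ∧ q.2 = r.2)

/-- `v` is balanced in the s-model `M`: either it has degree at most 1, or two neighbors
realizing the two largest values of `b^ℓ_M(v, ·)` are drawn collinearly with `v`. -/
def BalancedAt {G : SimpleGraph V} [DecidableRel G.Adj] (M : SModel G) (v : V) : Prop :=
  G.degree v ≤ 1 ∨
  ∃ u1 u2 : V, u1 ≠ u2 ∧ G.Adj v u1 ∧ G.Adj v u2 ∧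
    collinearGrid (M.toFun u1) (M.toFun v) (M.toFun u2) ∧
    ∀ w : V, G.Adj v w → w ≠ u1 → w ≠ u2 →
      leafBend M v w ≤ min (leafBend M v u1) (leafBend M v u2)

/-- The value `b^ℓ_M(v, u)` of a real or virtual (`none`) neighbor `u` of `v`; virtual
neighbors have value `-1`. -/
noncomputable def optVal {G : SimpleGraph V} [DecidableRel G.Adj] (M : SModel G) (v : V) :
    Option V → ℤ
  | none => -1
  | some u => (leafBend M v u : ℤ)

/-- `u1` and `u2` are the first two entries of a nonincreasing (w.r.t. `b^ℓ_M(v, ·)`)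
ordering of the real neighbors of `v` other than `p`, padded at the end with virtual
neighbors `none`. -/
def TopTwo {G : SimpleGraph V} [DecidableRel G.Adj] (M : SModel G) (p v : V) :
    Option V → Option V → Prop
  | none, u2 => u2 = none ∧ ∀ w, G.Adj v w → w = p
  | some a, none => G.Adj v a ∧ a ≠ p ∧ ∀ w, G.Adj v w → w ≠ p → w = a
  | some a, some b => G.Adj v a ∧ a ≠ p ∧ G.Adj v b ∧ b ≠ p ∧ a ≠ b ∧
      leafBend M v b ≤ leafBend M v a ∧
      ∀ w, G.Adj v w → w ≠ p → w ≠ a → w ≠ b → leafBend M v w ≤ leafBend M v b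

/-- Criticality of an ordered pair in an s-model `M`: every pair `(p, ∅)` is critical, and an
ordered edge `(p, v)` is critical if, for the first two entries `u1, u2` of some nonincreasing
ordering of the other neighbors of `v`, either `b^ℓ_M(p,v) = b^1` and `(v, u1)` is critical, or
`b^ℓ_M(p,v) = b^2 + 1` and both `(v, u1)` and `(v, u2)` are critical. -/
inductive Critical {G : SimpleGraph V} [DecidableRel G.Adj] (M : SModel G) :
    V → Option V → Prop
  | base (p : V) : Critical M p none
  | top1 (p v : V) (u1 u2 : Option V) (hadj : G.Adj p v)
      (htop : TopTwo M p v u1 u2)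
      (hb : (leafBend M p v : ℤ) = optVal M v u1)
      (hc : Critical M v u1) : Critical M p (some v)
  | top2 (p v : V) (u1 u2 : Option V) (hadj : G.Adj p v)
      (htop : TopTwo M p v u1 u2)
      (hb : (leafBend M p v : ℤ) = optVal M v u2 + 1)
      (hc1 : Critical M v u1) (hc2 : Critical M v u2) : Critical M p (some v)

end Defs

/-- Membership in the class of trees of the statement: a tree with maximum degree at most 4
having a vertex `r` of degree exactly 2 with distinct neighbors `r1`, `r2`, admitting a
balanced s-model `M` with `b^ℓ_M(r,r1) = b^ℓ_M(r,r2) = k - 1`. -/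
def ClassProp (k : ℕ) (V : Type) [Fintype V] (G : SimpleGraph V)
    [DecidableRel G.Adj] : Prop :=
  G.IsTree ∧ (∀ v, G.degree v ≤ 4) ∧
  ∃ (r r1 r2 : V) (M : SModel G),
    G.degree r = 2 ∧ G.Adj r r1 ∧ G.Adj r r2 ∧ r1 ≠ r2 ∧
    (∀ v, BalancedAt M v) ∧ leafBend M r r1 = k - 1 ∧ leafBend M r r2 = k - 1

/-- The full binary tree of height `k`, with vertex set the lists over `Bool` of length at
most `k`, rooted at the empty list; children of `l` are the lists `c :: l`. -/
def fullBinTree (k : ℕ) : SimpleGraph {l : List Bool // l.length ≤ k} :=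
  SimpleGraph.fromRel (fun a b => ∃ c : Bool, (b : List Bool) = c :: (a : List Bool))

/-- A tree with maximum degree at most 4 and minimum bend number `k`. -/
def TreeProp (k : ℕ) (V : Type) [Fintype V] (G : SimpleGraph V)
    [DecidableRel G.Adj] : Prop :=
  G.IsTree ∧ (∀ v, G.degree v ≤ 4) ∧ treeBendNum G = k

/-- The grid graph on `ℤ × ℤ`: two grid points are adjacent iff their distance is 1. -/
def gridGraph : SimpleGraph (ℤ × ℤ) :=
  SimpleGraph.fromRel (fun p q =>
    (p.1 = q.1 ∧ (p.2 - q.2).natAbs = 1) ∨ (p.2 = q.2 ∧ (p.1 - q.1).natAbs = 1))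

/-- `G` is a `B_k`-EPG graph: it has an EPG model by grid paths each with at most `k` bends;
distinct vertices are adjacent iff the corresponding grid paths share a grid edge. -/
def IsBkEPG {X : Type*} (G : SimpleGraph X) (k : ℕ) : Prop :=
  ∃ (s t : X → ℤ × ℤ) (P : ∀ x : X, gridGraph.Walk (s x) (t x)),
    (∀ x, (P x).IsPath) ∧ (∀ x, bends (id : ℤ × ℤ → ℤ × ℤ) (P x).support ≤ k) ∧
    ∀ x y : X, x ≠ y → (G.Adj x y ↔ ∃ e, e ∈ (P x).edges ∧ e ∈ (P y).edges)

/-- `⟨T, (Q x)_{x}⟩` is a VPT model of `G`: the `Q x` are pairwise distinct paths of the host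
tree `T`, and distinct vertices of `G` are adjacent iff their paths share a vertex of `T`. -/
def IsVPTModel {X W : Type*} (G : SimpleGraph X) (T : SimpleGraph W)
    (s t : X → W) (Q : ∀ x : X, T.Walk (s x) (t x)) : Prop :=
  (∀ x, (Q x).IsPath) ∧
  (∀ x y : X, x ≠ y → {w : W | w ∈ (Q x).support} ≠ {w : W | w ∈ (Q y).support}) ∧
  (∀ x y : X, x ≠ y → (G.Adj x y ↔ ∃ w : W, w ∈ (Q x).support ∧ w ∈ (Q y).support))

/-- A host tree with maximum degree at most 3 and minimum bend number `k`. -/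
def HostProp (k : ℕ) (W : Type) [Fintype W] (T : SimpleGraph W)
    [DecidableRel T.Adj] : Prop :=
  T.IsTree ∧ (∀ v, T.degree v ≤ 3) ∧ treeBendNum T = k

/-!
Induction on the number of vertices. Remove a leaf `ℓ` with neighbour `u`, draw the rest, and
double all coordinates (any strictly monotone change of coordinates preserves an s-model, since
two distinct edges meet in at most one point). The at most three other edges at `u` leave one of
the four grid directions `δ` free, and `ℓ` goes to `u + δ`: this point has an odd coordinate, so it
is no vertex, and it lies on a segment between even points only if `u` does, which in a connected
drawing forces the segment to be an edge at `u`.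
-/

theorem mem_seg_iff {p q r : ℤ × ℤ} :
    r ∈ seg p q ↔ (min p.1 q.1 ≤ r.1 ∧ r.1 ≤ max p.1 q.1) ∧
      (min p.2 q.2 ≤ r.2 ∧ r.2 ≤ max p.2 q.2) := by
  simp only [seg, Set.mem_ofPred_eq, Set.mem_uIcc]
  omega

theorem left_mem_seg (p q : ℤ × ℤ) : p ∈ seg p q := by
  simp [mem_seg_iff]

theorem seg_comm (p q : ℤ × ℤ) : seg p q = seg q p := by
  simp [seg, Set.uIcc_comm]

theorem seg_eq_seg_of_sym2_eq {V : Type*} (φ : V → ℤ × ℤ) {a b c d : V}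
    (h : s(a, b) = s(c, d)) : seg (φ a) (φ b) = seg (φ c) (φ d) := by
  rcases Sym2.eq_iff.mp h with ⟨rfl, rfl⟩ | ⟨rfl, rfl⟩
  exacts [rfl, seg_comm _ _]

def gridDirs : Finset (ℤ × ℤ) := {(1, 0), (-1, 0), (0, 1), (0, -1)}

theorem eq_of_add_mem_seg {p q δ δ' : ℤ × ℤ} (hpq : p.1 = q.1 ∨ p.2 = q.2)
    (hδ : δ ∈ gridDirs) (hδ' : δ' ∈ gridDirs) (h : p + δ ∈ seg p q)
    (h' : p + δ' ∈ seg p q) : δ = δ' := by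
  simp only [gridDirs, Finset.mem_insert, Finset.mem_singleton] at hδ hδ'
  rw [mem_seg_iff] at h h'
  rcases hδ with rfl | rfl | rfl | rfl <;> rcases hδ' with rfl | rfl | rfl | rfl <;>
    first
    | rfl
    | (simp only [Prod.fst_add, Prod.snd_add] at h h'; omega)

theorem eq_or_eq_of_mem_seg_add {p r δ : ℤ × ℤ} (hδ : δ ∈ gridDirs) (hr : r ∈ seg p (p + δ)) :
    r = p ∨ r = p + δ := by
  simp only [gridDirs, Finset.mem_insert, Finset.mem_singleton] at hδ
  rw [mem_seg_iff] at hr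
  simp only [Prod.ext_iff, Prod.fst_add, Prod.snd_add] at hr ⊢
  rcases hδ with rfl | rfl | rfl | rfl <;> omega

theorem mem_seg_of_add_mem_seg {p q r δ : ℤ × ℤ} (hp : 2 ∣ p.1 ∧ 2 ∣ p.2)
    (hq : 2 ∣ q.1 ∧ 2 ∣ q.2) (hr : 2 ∣ r.1 ∧ 2 ∣ r.2) (hδ : δ ∈ gridDirs)
    (h : p + δ ∈ seg q r) : p ∈ seg q r := by
  simp only [gridDirs, Finset.mem_insert, Finset.mem_singleton] at hδ
  rw [mem_seg_iff] at h ⊢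
  simp only [Prod.fst_add, Prod.snd_add] at h
  rcases hδ with rfl | rfl | rfl | rfl <;> omega

theorem add_ne_of_even {p q δ : ℤ × ℤ} (hp : 2 ∣ p.1 ∧ 2 ∣ p.2) (hq : 2 ∣ q.1 ∧ 2 ∣ q.2)
    (hδ : δ ∈ gridDirs) : p + δ ≠ q := by
  simp only [gridDirs, Finset.mem_insert, Finset.mem_singleton] at hδ
  simp only [ne_eq, Prod.ext_iff, Prod.fst_add, Prod.snd_add]
  rcases hδ with rfl | rfl | rfl | rfl <;> omega

theorem StrictMono.exists_le_le_of_mem_uIcc_inter {α β : Type*} [LinearOrder α]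
    [LinearOrder β] {f : α → β} (hf : StrictMono f) {a b c d : α} {t : β}
    (ht : t ∈ Set.uIcc (f a) (f b) ∩ Set.uIcc (f c) (f d)) :
    ∃ s₁ ∈ Set.uIcc a b ∩ Set.uIcc c d, ∃ s₂ ∈ Set.uIcc a b ∩ Set.uIcc c d,
      f s₁ ≤ t ∧ t ≤ f s₂ := by
  simp only [Set.uIcc, Set.Icc_inter_Icc, Set.mem_Icc] at ht ⊢
  have hlo : f (max (min a b) (min c d)) ≤ t := by
    rw [hf.monotone.map_max, hf.monotone.map_min, hf.monotone.map_min]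
    exact ht.1
  have hhi : t ≤ f (min (max a b) (max c d)) := by
    rw [hf.monotone.map_min, hf.monotone.map_max, hf.monotone.map_max]
    exact ht.2
  have hle := hf.le_iff_le.mp (hlo.trans hhi)
  exact ⟨_, ⟨le_rfl, hle⟩, _, ⟨hle, le_rfl⟩, hlo, hhi⟩

theorem SimpleGraph.degree_induce_le {V : Type*} [Fintype V] {G : SimpleGraph V}
    [DecidableRel G.Adj] (s : Set V) [DecidablePred (· ∈ s)] (v : s) :
    (G.induce s).degree v ≤ G.degree v := by
  classical
  rw [← card_neighborFinset_eq_degree, ← card_neighborFinset_eq_degree,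
    ← Finset.card_map, map_neighborFinset_induce]
  exact Finset.card_le_card Finset.inter_subset_left

theorem SimpleGraph.degree_induce_compl_singleton_add_one {V : Type*} [Fintype V]
    [DecidableEq V] {G : SimpleGraph V} [DecidableRel G.Adj] {ℓ : V} {u : ({ℓ}ᶜ : Set V)}
    (h : G.Adj u ℓ) : (G.induce {ℓ}ᶜ).degree u + 1 = G.degree u := by
  have hℓ : ℓ ∈ G.neighborFinset u := (G.mem_neighborFinset _ _).mpr h
  rw [← card_neighborFinset_eq_degree, ← card_neighborFinset_eq_degree,
    ← Finset.card_map, map_neighborFinset_induce, ← Finset.card_erase_add_one hℓ]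
  congr 2
  ext w
  simp [and_comm]

namespace SModel

variable {V : Type*} {G : SimpleGraph V}

def ofSubsingleton [Subsingleton V] (G : SimpleGraph V) : SModel G where
  toFun _ := (0, 0)
  inj a b _ := Subsingleton.elim a b
  axisAligned u v h := absurd (Subsingleton.elim u v) h.ne
  noCross u v _ _ h _ _ _ _ := absurd (Subsingleton.elim u v) h.ne

variable (M : SModel G)

theorem eq_of_mem_seg_inter {u v x y : V} (huv : G.Adj u v) (hxy : G.Adj x y)
    (hne : s(u, v) ≠ s(x, y)) {r r' : ℤ × ℤ}
    (hr : r ∈ seg (M.toFun u) (M.toFun v) ∩ seg (M.toFun x) (M.toFun y))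
    (hr' : r' ∈ seg (M.toFun u) (M.toFun v) ∩ seg (M.toFun x) (M.toFun y)) : r = r' := by
  obtain ⟨w, hwuv, hwxy, rfl⟩ := M.noCross huv hxy hne r hr
  obtain ⟨w', hw'uv, hw'xy, rfl⟩ := M.noCross huv hxy hne r' hr'
  by_contra h
  have hww : w ≠ w' := fun h' => h (congrArg _ h')
  refine hne (((Sym2.mem_and_mem_iff hww).mp ⟨?_, ?_⟩).trans
    ((Sym2.mem_and_mem_iff hww).mp ⟨?_, ?_⟩).symm) <;> simpa [Sym2.mem_iff]

def mapCoords {f g : ℤ → ℤ} (hf : StrictMono f) (hg : StrictMono g) : SModel G where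
  toFun v := (f (M.toFun v).1, g (M.toFun v).2)
  inj a b h := M.inj (Prod.ext (hf.injective (congrArg Prod.fst h))
    (hg.injective (congrArg Prod.snd h)))
  axisAligned u v h := by
    simpa only [hf.injective.eq_iff, hg.injective.eq_iff, ne_eq] using M.axisAligned h
  noCross u v x y huv hxy hne r hr := by
    obtain ⟨s₁, hs₁, s₂, hs₂, hs₁r, hrs₂⟩ :=
      hf.exists_le_le_of_mem_uIcc_inter ⟨hr.1.1, hr.2.1⟩
    obtain ⟨t₁, ht₁, t₂, ht₂, ht₁r, hrt₂⟩ :=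
      hg.exists_le_le_of_mem_uIcc_inter ⟨hr.1.2, hr.2.2⟩
    have hmem₁ : (s₁, t₁) ∈ seg (M.toFun u) (M.toFun v) ∩ seg (M.toFun x) (M.toFun y) :=
      ⟨⟨hs₁.1, ht₁.1⟩, ⟨hs₁.2, ht₁.2⟩⟩
    obtain ⟨rfl, rfl⟩ := Prod.mk.inj (M.eq_of_mem_seg_inter huv hxy hne hmem₁
      ⟨⟨hs₂.1, ht₂.1⟩, ⟨hs₂.2, ht₂.2⟩⟩)
    obtain ⟨w, hw, hw', hwr⟩ := M.noCross huv hxy hne _ hmem₁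
    refine ⟨w, hw, hw', ?_⟩
    rw [hwr]
    exact Prod.ext (le_antisymm hs₁r hrs₂) (le_antisymm ht₁r hrt₂)

theorem eq_or_eq_of_mem_seg_of_adj {v z x y : V} (hvz : G.Adj v z) (hxy : G.Adj x y)
    (hv : M.toFun v ∈ seg (M.toFun x) (M.toFun y)) : v = x ∨ v = y := by
  by_contra! h
  have hne : s(v, z) ≠ s(x, y) := fun he => by
    have := Sym2.mem_iff.mp (he ▸ Sym2.mem_mk_left v z)
    tauto
  obtain ⟨w, hw, hw', hwv⟩ := M.noCross hvz hxy hne _ ⟨left_mem_seg _ _, hv⟩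
  obtain rfl : w = v := M.inj hwv
  tauto

theorem eq_or_eq_of_mem_seg (hG : G.Preconnected) {v x y : V} (hxy : G.Adj x y)
    (hv : M.toFun v ∈ seg (M.toFun x) (M.toFun y)) : v = x ∨ v = y := by
  by_cases hvx : v = x
  · exact Or.inl hvx
  obtain ⟨p⟩ := hG v x
  exact M.eq_or_eq_of_mem_seg_of_adj (p.adj_snd (Walk.not_nil_of_ne hvx)) hxy hv

theorem exists_gridDir_forall_add_notMem_seg (v : V) [Fintype (G.neighborSet v)]
    (hv : G.degree v < 4) :
    ∃ δ ∈ gridDirs, ∀ w, G.Adj v w → M.toFun v + δ ∉ seg (M.toFun v) (M.toFun w) := by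
  by_contra! h
  have : Nonempty V := ⟨v⟩
  choose! c hc using h
  have hinj : Set.InjOn c gridDirs := fun δ hδ δ' hδ' he =>
    eq_of_add_mem_seg ((M.axisAligned (hc δ hδ).1).imp And.left And.left) hδ hδ'
      (hc δ hδ).2 (he ▸ (hc δ' hδ').2)
  have hcard := Finset.card_le_card_of_injOn c
    (fun δ hδ => (G.mem_neighborFinset _ _).mpr (hc δ hδ).1) hinj
  rw [card_neighborFinset_eq_degree] at hcard
  have : gridDirs.card = 4 := rfl
  omega

end SModel

namespace SModel

variable {V : Type*} {G : SimpleGraph V}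

theorem nonempty_of_induce_compl_singleton {ℓ : V} {u : ({ℓ}ᶜ : Set V)}
    (hu : ∀ w, G.Adj ℓ w ↔ w = u) (hconn : (G.induce {ℓ}ᶜ).Preconnected)
    (M : SModel (G.induce {ℓ}ᶜ)) (heven : ∀ v, 2 ∣ (M.toFun v).1 ∧ 2 ∣ (M.toFun v).2)
    {δ : ℤ × ℤ} (hδ : δ ∈ gridDirs)
    (hfree : ∀ w, (G.induce {ℓ}ᶜ).Adj u w → M.toFun u + δ ∉ seg (M.toFun u) (M.toFun w)) :
    Nonempty (SModel G) := by
  classical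
  let φ : V → ℤ × ℤ := fun v => if h : v = ℓ then M.toFun u + δ else M.toFun ⟨v, h⟩
  have hφℓ : φ ℓ = M.toFun u + δ := dif_pos rfl
  have hφ : ∀ v (h : v ≠ ℓ), φ v = M.toFun ⟨v, h⟩ := fun v h => dif_neg h
  have hφu : φ u = M.toFun u := hφ u u.2
  have hedge : ∀ {a b}, G.Adj a b → (a ≠ ℓ ∧ b ≠ ℓ) ∨ s(a, b) = s(ℓ, u) := by
    intro a b hab
    by_cases ha : a = ℓ
    · subst ha
      rw [(hu b).mp hab]
      exact Or.inr rfl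
    by_cases hb : b = ℓ
    · subst hb
      rw [(hu a).mp hab.symm]
      exact Or.inr Sym2.eq_swap
    exact Or.inl ⟨ha, hb⟩
  have pendant : ∀ {x y r}, G.Adj x y → (hx : x ≠ ℓ) → (hy : y ≠ ℓ) →
      r ∈ seg (φ ℓ) (φ u) → r ∈ seg (φ x) (φ y) → r = φ u ∧ (u.1 = x ∨ u.1 = y) := by
    intro x y r hxy hx hy hr hr'
    rw [hφℓ, hφu, seg_comm] at hr
    rw [hφ x hx, hφ y hy] at hr'
    have hxy' : (G.induce {ℓ}ᶜ).Adj ⟨x, hx⟩ ⟨y, hy⟩ := hxy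
    have hr_cases := eq_or_eq_of_mem_seg_add hδ hr
    have hu_mem : M.toFun u ∈ seg (M.toFun ⟨x, hx⟩) (M.toFun ⟨y, hy⟩) := by
      rcases hr_cases with rfl | rfl
      exacts [hr', mem_seg_of_add_mem_seg (heven _) (heven _) (heven _) hδ hr']
    have hux := M.eq_or_eq_of_mem_seg hconn hxy' hu_mem
    refine ⟨?_, hux.imp (congrArg Subtype.val) (congrArg Subtype.val)⟩
    rcases hr_cases with rfl | rfl
    · exact hφu.symm
    exfalso
    rcases hux with rfl | rfl
    · exact hfree _ hxy' hr'
    · exact hfree _ hxy'.symm (seg_comm _ _ ▸ hr')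
  have mixed : ∀ {a b x y r}, s(a, b) = s(ℓ, u) → G.Adj x y → x ≠ ℓ → y ≠ ℓ →
      r ∈ seg (φ a) (φ b) → r ∈ seg (φ x) (φ y) →
      ∃ w, (w = a ∨ w = b) ∧ (w = x ∨ w = y) ∧ φ w = r := by
    intro a b x y r hab hxy hx hy hr hr'
    rw [seg_eq_seg_of_sym2_eq φ hab] at hr
    obtain ⟨rfl, hux⟩ := pendant hxy hx hy hr hr'
    exact ⟨u, Sym2.mem_iff.mp (hab ▸ Sym2.mem_mk_right _ _), hux, rfl⟩
  refine ⟨⟨φ, fun a b hab => ?_, fun a b hab => ?_, fun a b x y hab hxy hne r hr => ?_⟩⟩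
  · by_cases ha : a = ℓ <;> by_cases hb : b = ℓ
    · rw [ha, hb]
    · rw [ha, hφℓ, hφ b hb] at hab
      exact absurd hab (add_ne_of_even (heven u) (heven _) hδ)
    · rw [hb, hφℓ, hφ a ha] at hab
      exact absurd hab.symm (add_ne_of_even (heven u) (heven _) hδ)
    · rw [hφ a ha, hφ b hb] at hab
      exact congrArg Subtype.val (M.inj hab)
  · rcases hedge hab with ⟨ha, hb⟩ | hab'
    · rw [hφ a ha, hφ b hb]
      exact M.axisAligned (show (G.induce {ℓ}ᶜ).Adj ⟨a, ha⟩ ⟨b, hb⟩ from hab)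
    simp only [gridDirs, Finset.mem_insert, Finset.mem_singleton] at hδ
    rcases Sym2.eq_iff.mp hab' with ⟨rfl, rfl⟩ | ⟨rfl, rfl⟩ <;> rw [hφℓ, hφu] <;>
      rcases hδ with rfl | rfl | rfl | rfl <;> simp
  · obtain ⟨hr, hr'⟩ := hr
    rcases hedge hab with ⟨ha, hb⟩ | hab' <;> rcases hedge hxy with ⟨hx, hy⟩ | hxy'
    · rw [hφ a ha, hφ b hb] at hr
      rw [hφ x hx, hφ y hy] at hr'
      have hne' : s((⟨a, ha⟩ : ({ℓ}ᶜ : Set V)), ⟨b, hb⟩) ≠ s(⟨x, hx⟩, ⟨y, hy⟩) := fun h =>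
        hne (by simpa using congrArg (Sym2.map Subtype.val) h)
      obtain ⟨w, hw, hw', hwr⟩ := M.noCross (show (G.induce {ℓ}ᶜ).Adj ⟨a, ha⟩ ⟨b, hb⟩ from hab)
        (show (G.induce {ℓ}ᶜ).Adj ⟨x, hx⟩ ⟨y, hy⟩ from hxy) hne' r ⟨hr, hr'⟩
      exact ⟨w, hw.imp (congrArg Subtype.val) (congrArg Subtype.val),
        hw'.imp (congrArg Subtype.val) (congrArg Subtype.val), (hφ _ w.2).trans hwr⟩
    · obtain ⟨w, hw, hw', hwr⟩ := mixed hxy' hab ha hb hr' hr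
      exact ⟨w, hw', hw, hwr⟩
    · exact mixed hab' hxy hx hy hr hr'
    · exact absurd (hab'.trans hxy'.symm) hne

theorem nonempty_of_leaf [Fintype V] [DecidableRel G.Adj] {ℓ : V} {u : ({ℓ}ᶜ : Set V)}
    (hu : ∀ w, G.Adj ℓ w ↔ w = u) (hdeg : G.degree u ≤ 4)
    (hconn : (G.induce {ℓ}ᶜ).Preconnected) (M : SModel (G.induce {ℓ}ᶜ)) :
    Nonempty (SModel G) := by
  classical
  have hmono : StrictMono ((2 : ℤ) * ·) := fun _ _ h => by dsimp only; omega
  let M₂ := M.mapCoords hmono hmono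
  have hdeg' : (G.induce {ℓ}ᶜ).degree u < 4 := by
    have := degree_induce_compl_singleton_add_one ((hu u).mpr rfl).symm
    omega
  obtain ⟨δ, hδ, hfree⟩ := M₂.exists_gridDir_forall_add_notMem_seg u hdeg'
  exact nonempty_of_induce_compl_singleton hu hconn M₂
    (fun _ => ⟨dvd_mul_right 2 _, dvd_mul_right 2 _⟩) hδ hfree

end SModel

theorem stmt_0 {V : Type*} [Fintype V] (G : SimpleGraph V) [DecidableRel G.Adj]
    (hT : G.IsTree) (hdeg : ∀ v, G.degree v ≤ 4) :
    Nonempty (SModel G) := by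
  classical
  induction hn : Fintype.card V using Nat.strong_induction_on generalizing V with
  | _ n ih =>
  rcases subsingleton_or_nontrivial V with hV | hV
  · exact ⟨SModel.ofSubsingleton G⟩
  obtain ⟨ℓ, hℓ⟩ := hT.exists_vert_degree_one_of_nontrivial
  obtain ⟨u, hℓu, hu⟩ := degree_eq_one_iff_existsUnique_adj.mp hℓ
  have hconn := hT.connected.induce_compl_singleton_of_degree_eq_one hℓ
  have hcard : Fintype.card ({ℓ}ᶜ : Set V) < n := hn ▸ Fintype.card_subtype_lt (x := ℓ) (by simp)
  obtain ⟨M⟩ := ih _ hcard (G.induce {ℓ}ᶜ) ⟨hconn, hT.isAcyclic.induce _⟩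
    (fun v => (G.degree_induce_le _ v).trans (hdeg v)) rfl
  exact SModel.nonempty_of_leaf (u := ⟨u, hℓu.ne'⟩) (fun w => ⟨hu w, fun h => h ▸ hℓu⟩)
    (hdeg u) hconn.preconnected M
end

section
/- Let φ be an s-model of a finite tree T with maximum degree at most 4, let v be a vertex of T with a neighbor p, and let u1 and u2 be two distinct neighbors of v both different from p. Then b^ℓ_φ(p,v) ≥ 1 + min(b^ℓ_φ(v,u1), b^ℓ_φ(v,u2)); in particular at most one neighbor u of v with u ≠ p satisfies that φ(p), φ(v), φ(u) are collinear. -/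
open SimpleGraph

/-!
Two edges at `v` drawn in the same direction would overlap, so two neighbours of `v` drawn
on a common grid line through `v` lie on opposite sides of `v`; hence at most one neighbour
other than `p` continues the line from `p` through `v`. For any other neighbour `u`, prepending
`p` to a path from `v` through `u` to a leaf creates a bend at `v`, so
`b^ℓ(p, v) ≥ 1 + b^ℓ(v, u)`, and one of `u1`, `u2` is such a neighbour.
-/

namespace SimpleGraph

variable {V : Type*} {G : SimpleGraph V}

theorem IsAcyclic.exists_isPath_degree_eq_one_of_support_subset [Fintype V] [DecidableRel G.Adj]
    (hG : G.IsAcyclic) {v u : V} (p : G.Walk v u) (hp : p.IsPath) (hnil : ¬p.Nil) :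
    ∃ (f : V) (q : G.Walk v f), q.IsPath ∧ G.degree f = 1 ∧ p.support ⊆ q.support := by
  by_cases hu : G.degree u = 1
  · exact ⟨u, p, hp, hu, fun _ h => h⟩
  obtain ⟨y, hy, hyne⟩ : ∃ y, G.Adj u y ∧ y ≠ p.penultimate := by
    by_contra! h
    exact hu (degree_eq_one_iff_existsUnique_adj.mpr
      ⟨_, (p.adj_penultimate hnil).symm, fun y hy => h y hy⟩)
  have hyp : y ∉ p.support := fun h => hyne (hG.eq_penultimate_of_adj_end hp hy h)
  obtain ⟨f, q, hq, hf, hsub⟩ :=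
    hG.exists_isPath_degree_eq_one_of_support_subset (p.concat hy) (hp.concat hyp hy)
      (Walk.not_nil_of_ne fun h => hyp (h ▸ p.start_mem_support))
  exact ⟨f, q, hq, hf, fun _ hx => hsub (p.support_subset_support_concat hy hx)⟩
termination_by Fintype.card V - p.length
decreasing_by
  have := hp.length_lt
  simp only [Walk.length_concat]
  omega

end SimpleGraph

open SimpleGraph

section Bends

variable {V : Type*}

theorem bends_cons_cons_cons (φ : V → ℤ × ℤ) (a b c : V) (L : List V) :
    bends φ (a :: b :: c :: L) = (if bendAt φ a b c then 1 else 0) + bends φ (b :: c :: L) := by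
  rw [bends, bends, bendVertices]
  split_ifs <;> simp [add_comm]

theorem bends_le_length (φ : V → ℤ × ℤ) (L : List V) : bends φ L ≤ L.length := by
  unfold bends
  fun_induction bendVertices φ L <;> grind

theorem bends_cons_support {G : SimpleGraph V} (φ : V → ℤ × ℤ) (a : V) {v f : V}
    (W : G.Walk v f) (hW : ¬W.Nil) :
    bends φ (a :: W.support) = (if bendAt φ a v W.snd then 1 else 0) + bends φ W.support := by
  rw [← W.cons_tail_eq hW, Walk.support_cons, ← W.tail.cons_tail_support, bends_cons_cons_cons]
  simp

end Bends

namespace SModel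

variable {V : Type*} {G : SimpleGraph V} (M : SModel G)

theorem apply_notMem_seg {v a b : V} (hva : G.Adj v a) (hvb : G.Adj v b) (hab : a ≠ b) :
    M.toFun a ∉ seg (M.toFun v) (M.toFun b) := by
  intro hmem
  have hne : s(v, a) ≠ s(v, b) := fun h => by
    rcases Sym2.eq_iff.mp h with ⟨-, h⟩ | ⟨h, -⟩
    · exact hab h
    · exact hvb.ne h
  obtain ⟨w, hw, hw', hwa⟩ := M.noCross hva hvb hne (M.toFun a)
    ⟨⟨Set.right_mem_uIcc, Set.right_mem_uIcc⟩, hmem⟩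
  rcases hw with rfl | rfl
  · exact hva.ne (M.inj hwa)
  · rcases hw' with rfl | rfl
    · exact hva.ne rfl
    · exact hab rfl

theorem mem_seg_of_collinearGrid {v a b : V} (hva : G.Adj v a) (hvb : G.Adj v b) (hab : a ≠ b)
    (h : collinearGrid (M.toFun a) (M.toFun v) (M.toFun b)) :
    M.toFun v ∈ seg (M.toFun a) (M.toFun b) := by
  by_contra hv
  -- of three points on a grid line, one lies between the other two
  have : M.toFun a ∈ seg (M.toFun v) (M.toFun b) ∨
      M.toFun b ∈ seg (M.toFun v) (M.toFun a) := by
    simp only [collinearGrid, seg, Set.mem_ofPred_eq, Set.mem_uIcc] at h hv ⊢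
    omega
  rcases this with h | h
  · exact M.apply_notMem_seg hva hvb hab h
  · exact M.apply_notMem_seg hvb hva hab.symm h

theorem eq_of_collinearGrid {p v w₁ w₂ : V} (hvp : G.Adj v p) (h₁ : G.Adj v w₁)
    (h₂ : G.Adj v w₂) (h₁p : w₁ ≠ p) (h₂p : w₂ ≠ p)
    (hc₁ : collinearGrid (M.toFun p) (M.toFun v) (M.toFun w₁))
    (hc₂ : collinearGrid (M.toFun p) (M.toFun v) (M.toFun w₂)) : w₁ = w₂ := by
  by_contra h₁₂
  have hpv : M.toFun p ≠ M.toFun v := M.inj.ne hvp.ne'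
  have hc : collinearGrid (M.toFun w₁) (M.toFun v) (M.toFun w₂) := by
    simp only [collinearGrid, ne_eq, Prod.ext_iff] at hc₁ hc₂ hpv ⊢
    omega
  have s₁ := M.mem_seg_of_collinearGrid hvp h₁ h₁p.symm hc₁
  have s₂ := M.mem_seg_of_collinearGrid hvp h₂ h₂p.symm hc₂
  have s₁₂ := M.mem_seg_of_collinearGrid h₁ h₂ h₁₂ hc
  have n₁ : M.toFun w₁ ≠ M.toFun v := M.inj.ne h₁.ne'
  have n₂ : M.toFun w₂ ≠ M.toFun v := M.inj.ne h₂.ne'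
  -- `v` would lie strictly between each two of the three collinear points `p`, `w₁`, `w₂`
  simp only [collinearGrid, seg, Set.mem_ofPred_eq, Set.mem_uIcc, ne_eq, Prod.ext_iff]
    at hc₁ hc₂ s₁ s₂ s₁₂ hpv n₁ n₂
  omega

theorem bendAt_of_not_collinearGrid {p v u : V} (hvp : G.Adj v p) (hvu : G.Adj v u)
    (h : ¬collinearGrid (M.toFun p) (M.toFun v) (M.toFun u)) : bendAt M.toFun p v u := by
  have := M.axisAligned hvp
  have := M.axisAligned hvu
  simp only [collinearGrid, bendAt] at h ⊢
  omega

variable [Fintype V] [DecidableRel G.Adj]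

theorem bddAbove_leafBend (p v : V) :
    BddAbove {n | ∃ (f : V) (W : G.Walk p f), W.IsPath ∧ G.degree f = 1 ∧ v ∈ W.support ∧
      bends M.toFun W.support = n} := by
  refine ⟨Fintype.card V, ?_⟩
  rintro _ ⟨f, W, hW, -, -, rfl⟩
  exact (bends_le_length _ _).trans hW.support_nodup.length_le_card

theorem exists_leafBend_eq (hG : G.IsAcyclic) {v u : V} (hvu : G.Adj v u) :
    ∃ (f : V) (W : G.Walk v f), W.IsPath ∧ G.degree f = 1 ∧ u ∈ W.support ∧
      bends M.toFun W.support = leafBend M v u := by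
  refine Nat.sSup_mem ?_ (M.bddAbove_leafBend v u)
  obtain ⟨f, W, hW, hf, hsub⟩ := hG.exists_isPath_degree_eq_one_of_support_subset
    hvu.toWalk (by simp [hvu.ne]) (by simp)
  exact ⟨_, f, W, hW, hf, hsub (by simp), rfl⟩

theorem leafBend_add_one_le (hG : G.IsAcyclic) {p v u : V} (hvp : G.Adj v p) (hvu : G.Adj v u)
    (hup : u ≠ p) (hbend : bendAt M.toFun p v u) : leafBend M v u + 1 ≤ leafBend M p v := by
  obtain ⟨f, W, hW, hf, huW, hbW⟩ := M.exists_leafBend_eq hG hvu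
  have hnil : ¬W.Nil := fun h => hvu.ne' (by simpa [Walk.nil_iff_support_eq.mp h] using huW)
  have hu : u = W.snd := hG.eq_snd_of_adj_start hW hvu huW
  have hpW : p ∉ W.support := fun h => hup (hu.trans (hG.eq_snd_of_adj_start hW hvp h).symm)
  refine le_csSup (M.bddAbove_leafBend p v)
    ⟨f, W.cons hvp.symm, hW.cons hpW, hf, by simp, ?_⟩
  rw [Walk.support_cons, bends_cons_support _ _ _ hnil, ← hu, if_pos hbend, hbW, add_comm]

end SModel

theorem stmt_3_general {V : Type*} [Fintype V] (G : SimpleGraph V) [DecidableRel G.Adj]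
    (hT : G.IsTree) (M : SModel G)
    (p v u1 u2 : V) (hvp : G.Adj v p) (h1 : G.Adj v u1) (h2 : G.Adj v u2)
    (h12 : u1 ≠ u2) (h1p : u1 ≠ p) (h2p : u2 ≠ p) :
    1 + min (leafBend M v u1) (leafBend M v u2) ≤ leafBend M p v ∧
    ∀ w1 w2 : V, G.Adj v w1 → G.Adj v w2 → w1 ≠ p → w2 ≠ p →
      collinearGrid (M.toFun p) (M.toFun v) (M.toFun w1) →
      collinearGrid (M.toFun p) (M.toFun v) (M.toFun w2) → w1 = w2 := by
  refine ⟨?_, fun _ _ => M.eq_of_collinearGrid hvp⟩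
  by_cases hc1 : collinearGrid (M.toFun p) (M.toFun v) (M.toFun u1)
  · have hc2 : ¬collinearGrid (M.toFun p) (M.toFun v) (M.toFun u2) := fun hc2 =>
      h12 (M.eq_of_collinearGrid hvp h1 h2 h1p h2p hc1 hc2)
    have := M.leafBend_add_one_le hT.isAcyclic hvp h2 h2p
      (M.bendAt_of_not_collinearGrid hvp h2 hc2)
    omega
  · have := M.leafBend_add_one_le hT.isAcyclic hvp h1 h1p
      (M.bendAt_of_not_collinearGrid hvp h1 hc1)
    omega

theorem stmt_3 {V : Type*} [Fintype V] (G : SimpleGraph V) [DecidableRel G.Adj]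
    (hT : G.IsTree) (hdeg : ∀ v, G.degree v ≤ 4) (M : SModel G)
    (p v u1 u2 : V) (hvp : G.Adj v p) (h1 : G.Adj v u1) (h2 : G.Adj v u2)
    (h12 : u1 ≠ u2) (h1p : u1 ≠ p) (h2p : u2 ≠ p) :
    1 + min (leafBend M v u1) (leafBend M v u2) ≤ leafBend M p v ∧
    ∀ w1 w2 : V, G.Adj v w1 → G.Adj v w2 → w1 ≠ p → w2 ≠ p →
      collinearGrid (M.toFun p) (M.toFun v) (M.toFun w1) →
      collinearGrid (M.toFun p) (M.toFun v) (M.toFun w2) → w1 = w2 :=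
  stmt_3_general G hT M p v u1 u2 hvp h1 h2 h12 h1p h2p
end

section
/- Let φ be a balanced s-model of a finite tree T with maximum degree at most 4, and let P be a leaf-to-leaf path of T with exactly k ≥ 1 bends in φ, bending at the vertices v_1,…,v_k listed in order along P. Then every v_i has degree at least 3 in T, and for each 1 ≤ i ≤ k there exists a neighbor w_i of v_i, distinct from both neighbors of v_i on P, with b^ℓ_φ(v_i,w_i) ≥ min{i − 1, k − i}. -/
open SimpleGraph

/-! Write `x, y` for the neighbours of the bend vertex `v = v_i` on `P`. Cutting `P` at `v` gives a
path from `v` through `x` to a leaf with the `i` earlier bends and one from `v` through `y` to a leaf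
with the `k - 1 - i` later bends, so `b^ℓ(v, x) ≥ i` and `b^ℓ(v, y) ≥ k - 1 - i`. As `P` bends at
`v`, the pair `x, y` is not collinear with `v`, so it is not the collinear top pair `u¹, u²` of the
balanced vertex `v`; hence one of `u¹, u²` is a third neighbour `w`, and it dominates whichever of
`x, y` lies outside the top pair. -/

section BendVertices

variable {V : Type*} (φ : V → ℤ × ℤ)

theorem bendAt_comm {a b c : V} : bendAt φ a b c ↔ bendAt φ c b a := by
  unfold bendAt
  constructor <;> rintro (⟨h₁, h₂⟩ | ⟨h₁, h₂⟩)
  exacts [.inr ⟨h₂.symm, h₁.symm⟩, .inl ⟨h₂.symm, h₁.symm⟩,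
    .inr ⟨h₂.symm, h₁.symm⟩, .inl ⟨h₂.symm, h₁.symm⟩]

theorem length_bendVertices_le : ∀ L : List V, (bendVertices φ L).length ≤ L.length
  | a :: b :: c :: L => by
    have := length_bendVertices_le (b :: c :: L)
    simp only [bendVertices, List.length_append, List.length_cons] at this ⊢
    split <;> simp only [List.length_cons, List.length_nil] <;> omega
  | [] | [_] | [_, _] => by simp [bendVertices]

theorem bendVertices_append_cons_cons : ∀ (A : List V) (x y : V) (B : List V),
    bendVertices φ (A ++ x :: y :: B) =
      bendVertices φ (A ++ [x, y]) ++ bendVertices φ (x :: y :: B)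
  | [], _, _, _ | [_], _, _, _ => by simp [bendVertices]
  | a :: a' :: A, x, y, B => by
    have ih := bendVertices_append_cons_cons (a' :: A) x y B
    cases A with
    | nil => simp [bendVertices]
    | cons a'' A =>
      simp only [List.cons_append, bendVertices] at ih ⊢
      rw [ih, List.append_assoc]

theorem length_bendVertices_reverse : ∀ L : List V,
    (bendVertices φ L.reverse).length = (bendVertices φ L).length
  | a :: b :: c :: L => by
    have ih := length_bendVertices_reverse (b :: c :: L)
    have hrev : (b :: c :: L).reverse = L.reverse ++ [c, b] := by simp
    rw [show (a :: b :: c :: L).reverse = L.reverse ++ c :: b :: [a] by simp,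
      bendVertices_append_cons_cons, List.length_append, ← hrev, ih]
    simp only [bendVertices, (bendAt_comm φ).symm, List.length_append]
    split <;> simp [Nat.add_comm]
  | [] | [_] | [_, _] => by simp [bendVertices]

theorem exists_eq_append_of_bendVertices_getElem : ∀ (L : List V) (i : ℕ)
    (hi : i < (bendVertices φ L).length),
    ∃ A x y B, L = A ++ x :: (bendVertices φ L)[i] :: y :: B ∧
      bendAt φ x (bendVertices φ L)[i] y ∧
      (bendVertices φ ((bendVertices φ L)[i] :: y :: B)).length =
        (bendVertices φ L).length - i - 1
  | a :: b :: c :: L, i, hi => by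
    by_cases hb : bendAt φ a b c
    · have he : bendVertices φ (a :: b :: c :: L) = b :: bendVertices φ (b :: c :: L) := by
        simp [bendVertices, hb]
      simp only [he, List.length_cons] at hi ⊢
      cases i with
      | zero => exact ⟨[], a, c, L, rfl, hb, by simp⟩
      | succ j =>
        obtain ⟨A, x, y, B, hL, hbend, hsuf⟩ :=
          exists_eq_append_of_bendVertices_getElem (b :: c :: L) j (by omega)
        exact ⟨a :: A, x, y, B, by simp [← hL], hbend, by simpa using hsuf⟩
    · have he : bendVertices φ (a :: b :: c :: L) = bendVertices φ (b :: c :: L) := by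
        simp [bendVertices, hb]
      simp only [he] at hi ⊢
      obtain ⟨A, x, y, B, hL, hbend, hsuf⟩ :=
        exists_eq_append_of_bendVertices_getElem (b :: c :: L) i hi
      exact ⟨a :: A, x, y, B, by simp [← hL], hbend, hsuf⟩
  | [], _, hi | [_], _, hi | [_, _], _, hi => by simp [bendVertices] at hi

end BendVertices

theorem List.Nodup.eq_of_infix_of_infix {V : Type*} {L : List V} (hL : L.Nodup)
    {x v y x' y' : V} (h : [x, v, y] <:+: L) (h' : [x', v, y'] <:+: L) : x = x' ∧ y = y' := by
  obtain ⟨s, t, rfl⟩ := h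
  obtain ⟨s', t', he⟩ := h'
  have split : ∀ (s t : List V) (x y : V), s ++ [x, v, y] ++ t = (s ++ [x]) ++ v :: y :: t := by
    simp
  simp only [split] at hL he
  have hv : v ∉ s ++ [x] ∧ v ∉ y :: t :=
    ⟨fun hm => (List.nodup_append.mp hL).2.2 v hm v List.mem_cons_self rfl,
      (List.nodup_cons.mp (List.nodup_append.mp hL).2.1).1⟩
  obtain ⟨hs, -, ht⟩ := (List.append_cons_inj_of_notMem hv.1 hv.2).mp he.symm
  simp only [List.cons.injEq] at ht
  exact ⟨(List.append_inj' hs rfl).2 |> List.singleton_inj.mp, ht.1⟩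

namespace SimpleGraph

variable {V : Type*} {G : SimpleGraph V}

theorem Walk.exists_eq_append_of_support_eq {u w v : V} {A B : List V} :
    ∀ (W : G.Walk u w), W.support = A ++ v :: B →
      ∃ (P : G.Walk u v) (Q : G.Walk v w), W = P.append Q ∧
        P.support = A ++ [v] ∧ Q.support = v :: B := by
  induction A generalizing u with
  | nil =>
    intro W hW
    obtain rfl : u = v := (List.cons.inj (W.cons_tail_support.trans hW)).1
    exact ⟨nil, W, by simp, rfl, hW⟩
  | cons c A ih =>
    rintro (_ | ⟨hadj, W⟩) hW
    · simp at hW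
    · simp only [Walk.support_cons, List.cons_append, List.cons.injEq] at hW
      obtain ⟨P, Q, hPQ, hP, hQ⟩ := ih W hW.2
      exact ⟨cons hadj P, Q, by rw [hPQ, cons_append], by simp [hP, hW.1], hQ⟩

theorem card_le_degree_of_forall_adj [Fintype V] [DecidableRel G.Adj] {v : V} {s : Finset V}
    (hs : ∀ u ∈ s, G.Adj v u) : s.card ≤ G.degree v := by
  rw [← card_neighborFinset_eq_degree]
  exact Finset.card_le_card fun u hu => (mem_neighborFinset G v u).mpr (hs u hu)

end SimpleGraph

open SimpleGraph

section Balanced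

variable {V : Type*} [Fintype V] {G : SimpleGraph V} [DecidableRel G.Adj] (M : SModel G)

theorem bends_le_leafBend {v f w : V} (W : G.Walk v f) (hW : W.IsPath)
    (hf : G.degree f = 1) (hw : w ∈ W.support) : bends M.toFun W.support ≤ leafBend M v w := by
  refine le_csSup ⟨Fintype.card V, ?_⟩ ⟨f, W, hW, hf, hw, rfl⟩
  rintro n ⟨f', W', hW', -, -, rfl⟩
  exact (length_bendVertices_le _ _).trans hW'.support_nodup.length_le_card

omit [Fintype V] [DecidableRel G.Adj] in
theorem not_collinearGrid_of_bendAt {x v y : V} (hx : G.Adj v x) (hy : G.Adj v y)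
    (hbend : bendAt M.toFun x v y) : ¬ collinearGrid (M.toFun x) (M.toFun v) (M.toFun y) := by
  have hxv : M.toFun x ≠ M.toFun v := fun h => hx.ne' (M.inj h)
  have hyv : M.toFun y ≠ M.toFun v := fun h => hy.ne' (M.inj h)
  rintro (⟨h₁, h₂⟩ | ⟨h₁, h₂⟩) <;> rcases hbend with ⟨b₁, b₂⟩ | ⟨b₁, b₂⟩
  exacts [hyv (Prod.ext h₂.symm b₂.symm), hxv (Prod.ext h₁ b₁),
    hxv (Prod.ext b₁ h₁), hyv (Prod.ext b₂.symm h₂.symm)]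

theorem BalancedAt.exists_adj_min_le {v x y : V} (hbal : BalancedAt M v) (hx : G.Adj v x)
    (hy : G.Adj v y) (hxy : x ≠ y) (hbend : bendAt M.toFun x v y) :
    ∃ w, G.Adj v w ∧ w ≠ x ∧ w ≠ y ∧
      min (leafBend M v x) (leafBend M v y) ≤ leafBend M v w := by
  classical
  rcases hbal with hdeg | ⟨u₁, u₂, hu, hu₁, hu₂, hcol, htop⟩
  · have := card_le_degree_of_forall_adj (G := G) (v := v) (s := {x, y}) (by simp [hx, hy])
    rw [Finset.card_pair hxy] at this
    omega
  have beat : ∀ z z', G.Adj v z → z ≠ u₁ → z ≠ u₂ →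
      ∃ w, G.Adj v w ∧ w ≠ z ∧ w ≠ z' ∧ leafBend M v z ≤ leafBend M v w := by
    intro z z' hz hz₁ hz₂
    by_cases hz' : z' = u₁
    · exact ⟨u₂, hu₂, hz₂.symm, fun h => hu (hz' ▸ h).symm,
        (htop z hz hz₁ hz₂).trans (min_le_right _ _)⟩
    · exact ⟨u₁, hu₁, hz₁.symm, Ne.symm hz', (htop z hz hz₁ hz₂).trans (min_le_left _ _)⟩
  by_cases hx' : x ≠ u₁ ∧ x ≠ u₂
  · obtain ⟨w, hw, hwx, hwy, hle⟩ := beat x y hx hx'.1 hx'.2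
    exact ⟨w, hw, hwx, hwy, (min_le_left _ _).trans hle⟩
  by_cases hy' : y ≠ u₁ ∧ y ≠ u₂
  · obtain ⟨w, hw, hwy, hwx, hle⟩ := beat y x hy hy'.1 hy'.2
    exact ⟨w, hw, hwx, hwy, (min_le_right _ _).trans hle⟩
  -- otherwise `{x, y} = {u₁, u₂}`, and the collinear top two would not bend
  push Not at hx' hy'
  by_cases hxu : x = u₁
  · subst hxu
    obtain rfl := hy' hxy.symm
    exact absurd hcol (not_collinearGrid_of_bendAt M hx hy hbend)
  · have hxu₂ := hx' hxu
    have hyu₁ : y = u₁ := by_contra fun h => hxy (hxu₂.trans (hy' h).symm)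
    subst hxu₂ hyu₁
    exact absurd hcol (not_collinearGrid_of_bendAt M hy hx ((bendAt_comm _).mp hbend))

theorem exists_infix_support_bendAt_le_leafBend {a b : V} {W : G.Walk a b} (hW : W.IsPath)
    (ha : G.degree a = 1) (hb : G.degree b = 1) {i : ℕ}
    (hi : i < (bendVertices M.toFun W.support).length) :
    ∃ x y, [x, (bendVertices M.toFun W.support)[i], y] <:+: W.support ∧
      bendAt M.toFun x (bendVertices M.toFun W.support)[i] y ∧
      i ≤ leafBend M (bendVertices M.toFun W.support)[i] x ∧
      (bendVertices M.toFun W.support).length - 1 - i ≤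
        leafBend M (bendVertices M.toFun W.support)[i] y := by
  obtain ⟨A, x, y, B, hL, hbend, hsuf⟩ :=
    exists_eq_append_of_bendVertices_getElem M.toFun W.support i hi
  set v := (bendVertices M.toFun W.support)[i]
  have hpre : (bendVertices M.toFun (A ++ [x, v])).length = i := by
    have hsplit := bendVertices_append_cons_cons M.toFun A x v (y :: B)
    have hbendv : bendVertices M.toFun (x :: v :: y :: B) =
        v :: bendVertices M.toFun (v :: y :: B) := by
      simp [bendVertices, hbend]
    rw [← hL, hbendv] at hsplit
    have := congrArg List.length hsplit
    simp only [List.length_append, List.length_cons] at this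
    omega
  obtain ⟨P, Q, hPQ, hP, hQ⟩ :=
    W.exists_eq_append_of_support_eq (A := A ++ [x]) (v := v) (B := y :: B) (by simp [hL])
  rw [hPQ] at hW
  refine ⟨x, y, ⟨A, B, by simp [hL]⟩, hbend, ?_, ?_⟩
  · have := bends_le_leafBend M P.reverse hW.of_append_left.reverse ha (w := x) (by simp [hP])
    rwa [bends, Walk.support_reverse, length_bendVertices_reverse, hP, List.append_assoc,
      List.singleton_append, hpre] at this
  · have := bends_le_leafBend M Q hW.of_append_right hb (w := y) (by simp [hQ])
    rw [bends, hQ, hsuf] at this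
    omega

theorem three_le_degree_and_exists_adj_off_path_of_bend (hbal : ∀ z, BalancedAt M z) {a b : V}
    {W : G.Walk a b} (hW : W.IsPath) (ha : G.degree a = 1) (hb : G.degree b = 1) {i : ℕ}
    (hi : i < (bendVertices M.toFun W.support).length) :
    3 ≤ G.degree (bendVertices M.toFun W.support)[i] ∧
      ∃ w, G.Adj (bendVertices M.toFun W.support)[i] w ∧
        (∀ x y, [x, (bendVertices M.toFun W.support)[i], y] <:+: W.support → w ≠ x ∧ w ≠ y) ∧
        min i ((bendVertices M.toFun W.support).length - 1 - i) ≤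
          leafBend M (bendVertices M.toFun W.support)[i] w := by
  classical
  obtain ⟨x, y, hinf, hbend, hix, hiy⟩ := exists_infix_support_bendAt_le_leafBend M hW ha hb hi
  have hx := W.adj_of_infix_support ((List.prefix_append [x, _] [y]).isInfix.trans hinf)
  have hy := W.adj_of_infix_support ((List.suffix_append [x] [_, y]).isInfix.trans hinf)
  have hxy : x ≠ y := by
    have := hW.support_nodup.sublist hinf.sublist
    simp_all
  obtain ⟨w, hw, hwx, hwy, hmin⟩ := (hbal _).exists_adj_min_le M hx.symm hy hxy hbend
  refine ⟨?_, w, hw, fun x' y' h' => ?_, (min_le_min hix hiy).trans hmin⟩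
  · rw [← Finset.card_eq_three.mpr ⟨x, y, w, hxy, hwx.symm, hwy.symm, rfl⟩]
    exact card_le_degree_of_forall_adj (by simp [hx.symm, hy, hw])
  · obtain ⟨rfl, rfl⟩ := hW.support_nodup.eq_of_infix_of_infix hinf h'
    exact ⟨hwx, hwy⟩

end Balanced

theorem stmt_13 {V : Type*} [Fintype V] (G : SimpleGraph V) [DecidableRel G.Adj]
    (M : SModel G)
    (hbal : ∀ x, BalancedAt M x) (a b : V) (W : G.Walk a b) (hW : W.IsPath)
    (ha : G.degree a = 1) (hb : G.degree b = 1) (k : ℕ)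
    (hlen : (bendVertices M.toFun W.support).length = k) :
    (∀ u ∈ bendVertices M.toFun W.support, 3 ≤ G.degree u) ∧
    ∀ i : ℕ, ∀ hi : i < k, ∃ wi : V,
      G.Adj ((bendVertices M.toFun W.support).get ⟨i, by omega⟩) wi ∧
      (∀ x y : V,
        List.IsInfix [x, (bendVertices M.toFun W.support).get ⟨i, by omega⟩, y]
          W.support → wi ≠ x ∧ wi ≠ y) ∧
      min i (k - 1 - i) ≤
        leafBend M ((bendVertices M.toFun W.support).get ⟨i, by omega⟩) wi := by
  subst hlen
  have bend := fun i (hi : i < (bendVertices M.toFun W.support).length) =>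
    three_le_degree_and_exists_adj_off_path_of_bend M hbal hW ha hb hi
  refine ⟨fun u hu => ?_, fun i hi => ?_⟩
  · obtain ⟨i, hi, rfl⟩ := List.getElem_of_mem hu
    exact (bend i hi).1
  · simpa only [List.get_eq_getElem] using (bend i hi).2
end
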